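/- Let m ≥ n, let A and B be m×n complex matrices with rank(A) = rank(B) = n (full column rank), and let E = B − A. Then ‖B† − A†‖_F² ≤ min{‖B†‖₂²‖EA†‖_F², ‖A†‖₂²‖EB†‖_F²}. -/

import Mathlib

open Matrix

/-- The square of the Frobenius norm of a complex matrix. -/
noncomputable def frobSq {α β : Type*} [Fintype α] [Fintype β] (M : Matrix α β ℂ) : ℝ :=
  ∑ i, ∑ j, ‖M i j‖ ^ 2

/-- The spectral norm (ℓ²-operator norm) of a complex matrix. -/
noncomputable def spec {α β : Type*} [Fintype α] [Fintype β] [DecidableEq β]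
    (M : Matrix α β ℂ) : ℝ :=
  ‖LinearMap.toContinuousLinearMap (Matrix.toEuclideanLin M)‖

/-- `X` is the Moore–Penrose inverse of `M` (the four Penrose equations). -/
def IsMoorePenrose {α β : Type*} [Fintype α] [Fintype β]
    (M : Matrix α β ℂ) (X : Matrix β α ℂ) : Prop :=
  M * X * M = M ∧ X * M * X = X ∧ (M * X)ᴴ = M * X ∧ (X * M)ᴴ = X * M

/-!
Full column rank gives `A† A = 1` and `B† B = 1`, so `P = A A†` and `Q = B B†` are orthogonal
projections of the same trace. Splitting along `P`,
`B† - A† = -B† Q (B - A) A† + B† Q (1 - P)` with orthogonal summands, and `‖B†‖₂` bounds each.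
Equal traces give `‖Q (1 - P)‖_F = ‖(1 - Q) P‖_F`, and `(1 - Q) P = -(1 - Q) (B - A) A†`, so by
Pythagoras along `Q` the two bounds add up to `‖B†‖₂² ‖(B - A) A†‖_F²`. Exchanging `A` and `B`
gives the other bound.
-/

variable {α β γ : Type*} [Fintype α] [Fintype β] [Fintype γ]

lemma frobSq_eq_re_trace (M : Matrix α β ℂ) : frobSq M = (Mᴴ * M).trace.re := by
  simp only [frobSq, trace, diag_apply, mul_apply, conjTranspose_apply, Complex.re_sum]
  rw [Finset.sum_comm]
  refine Finset.sum_congr rfl fun i _ => Finset.sum_congr rfl fun j _ => ?_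
  rw [mul_comm, RCLike.star_def, Complex.mul_conj, Complex.normSq_eq_norm_sq]
  norm_cast

@[simp]
lemma frobSq_neg (M : Matrix α β ℂ) : frobSq (-M) = frobSq M := by
  simp [frobSq]

lemma frobSq_sub_comm (M N : Matrix α β ℂ) : frobSq (M - N) = frobSq (N - M) := by
  rw [← frobSq_neg, neg_sub]

@[simp]
lemma frobSq_conjTranspose (M : Matrix α β ℂ) : frobSq Mᴴ = frobSq M := by
  rw [frobSq, frobSq, Finset.sum_comm]
  simp [conjTranspose_apply]

lemma frobSq_add_of_trace_eq_zero {M N : Matrix α β ℂ} (h : (Mᴴ * N).trace = 0) :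
    frobSq (M + N) = frobSq M + frobSq N := by
  have h' : (Nᴴ * M).trace = 0 := by
    rw [← conjTranspose_conjTranspose M, ← conjTranspose_mul, trace_conjTranspose, h, star_zero]
  simp only [frobSq_eq_re_trace, conjTranspose_add, Matrix.add_mul, Matrix.mul_add, trace_add, h,
    h', Complex.add_re, Complex.zero_re]
  ring

lemma frobSq_mul_le [DecidableEq β] (M : Matrix α β ℂ) (N : Matrix β γ ℂ) :
    frobSq (M * N) ≤ spec M ^ 2 * frobSq N := by
  let col : γ → EuclideanSpace ℂ β := fun j => WithLp.toLp 2 fun i => N i j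
  have hcol : ∀ j, ‖col j‖ ^ 2 = ∑ i, ‖N i j‖ ^ 2 := fun j => EuclideanSpace.norm_sq_eq _
  have hMcol : ∀ j, ‖toEuclideanLin M (col j)‖ ^ 2 = ∑ i, ‖(M * N) i j‖ ^ 2 := fun j => by
    rw [toLpLin_toLp, EuclideanSpace.norm_sq_eq]
    rfl
  rw [frobSq, frobSq, Finset.sum_comm, Finset.sum_comm (f := fun i j => ‖N i j‖ ^ 2),
    Finset.mul_sum]
  refine Finset.sum_le_sum fun j _ => ?_
  rw [← hcol, ← hMcol, ← mul_pow]
  gcongr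
  exact (LinearMap.toContinuousLinearMap (toEuclideanLin M)).le_opNorm (col j)

section StarProjection

variable {P Q : Matrix α α ℂ}

lemma IsStarProjection.frobSq_eq_re_trace (hP : IsStarProjection P) :
    frobSq P = P.trace.re := by
  rw [_root_.frobSq_eq_re_trace, ← star_eq_conjTranspose, hP.isSelfAdjoint.star_eq,
    hP.isIdempotentElem.eq]

variable [DecidableEq α]

lemma IsStarProjection.frobSq_eq_mul_add_one_sub_mul (hP : IsStarProjection P)
    (M : Matrix α β ℂ) : frobSq M = frobSq (P * M) + frobSq ((1 - P) * M) := by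
  have horth : (P * M)ᴴ * ((1 - P) * M) = 0 := by
    rw [conjTranspose_mul, ← star_eq_conjTranspose P, hP.isSelfAdjoint.star_eq, Matrix.mul_assoc,
      ← Matrix.mul_assoc P, hP.mul_one_sub_self, Matrix.zero_mul, Matrix.mul_zero]
  rw [← frobSq_add_of_trace_eq_zero (by rw [horth, trace_zero]), ← Matrix.add_mul,
    add_sub_cancel, Matrix.one_mul]

lemma IsStarProjection.frobSq_eq_mul_add_mul_one_sub (hP : IsStarProjection P)
    (M : Matrix β α ℂ) : frobSq M = frobSq (M * P) + frobSq (M * (1 - P)) := by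
  have hPH : Pᴴ = P := hP.isSelfAdjoint.star_eq
  have h1PH : (1 - P)ᴴ = 1 - P := hP.one_sub.isSelfAdjoint.star_eq
  rw [← frobSq_conjTranspose M, hP.frobSq_eq_mul_add_one_sub_mul, ← frobSq_conjTranspose (M * P),
    ← frobSq_conjTranspose (M * (1 - P)), conjTranspose_mul, conjTranspose_mul, hPH, h1PH]

/-- Both sides equal `tr P - ‖P Q‖_F²`. -/
lemma IsStarProjection.frobSq_mul_one_sub_eq (hP : IsStarProjection P) (hQ : IsStarProjection Q)
    (htr : P.trace = Q.trace) : frobSq (Q * (1 - P)) = frobSq ((1 - Q) * P) := by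
  have hPH : Pᴴ = P := hP.isSelfAdjoint.star_eq
  have hQH : Qᴴ = Q := hQ.isSelfAdjoint.star_eq
  have h1PH : (1 - P)ᴴ = 1 - P := hP.one_sub.isSelfAdjoint.star_eq
  have hQ_split := hP.frobSq_eq_mul_add_one_sub_mul Q
  have hP_split := hQ.frobSq_eq_mul_add_one_sub_mul P
  have hswap : frobSq (Q * P) = frobSq (P * Q) := by
    rw [← frobSq_conjTranspose, conjTranspose_mul, hPH, hQH]
  have hswap' : frobSq (Q * (1 - P)) = frobSq ((1 - P) * Q) := by
    rw [← frobSq_conjTranspose, conjTranspose_mul, hQH, h1PH]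
  rw [hP.frobSq_eq_re_trace, htr, ← hQ.frobSq_eq_re_trace] at hP_split
  linarith

end StarProjection

lemma Matrix.isUnit_of_rank_eq_card {K : Type*} [Field K] [DecidableEq α] {M : Matrix α α K}
    (h : M.rank = Fintype.card α) : IsUnit M := by
  rw [← mulVec_injective_iff_isUnit, ← coe_mulVecLin, LinearMap.injective_iff_surjective,
    ← LinearMap.range_eq_top]
  apply Submodule.eq_top_of_finrank_eq
  rw [← Matrix.rank, h, Module.finrank_fintype_fun_eq_card]

namespace IsMoorePenrose

variable {A B : Matrix α β ℂ} {A' B' : Matrix β α ℂ}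

lemma isStarProjection_mul (hA : IsMoorePenrose A A') : IsStarProjection (A * A') where
  isIdempotentElem := by
    rw [IsIdempotentElem, Matrix.mul_assoc, ← Matrix.mul_assoc A', hA.2.1]
  isSelfAdjoint := hA.2.2.1

lemma mul_eq_one_of_rank_eq [DecidableEq β] (hA : IsMoorePenrose A A')
    (hrank : A.rank = Fintype.card β) : A' * A = 1 := by
  have hidem : IsIdempotentElem (A' * A) := by
    rw [IsIdempotentElem, Matrix.mul_assoc, ← Matrix.mul_assoc A, hA.1]
  refine (IsIdempotentElem.iff_eq_one_of_isUnit (isUnit_of_rank_eq_card ?_)).mp hidem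
  refine le_antisymm (rank_le_card_width _) ?_
  calc Fintype.card β = (A * (A' * A)).rank := by rw [← Matrix.mul_assoc, hA.1, hrank]
    _ ≤ (A' * A).rank := rank_mul_le_right _ _

theorem frobSq_sub_le [DecidableEq α] [DecidableEq β] (hA : IsMoorePenrose A A')
    (hB : IsMoorePenrose B B') (hA1 : A' * A = 1) (hB1 : B' * B = 1) :
    frobSq (B' - A') ≤ spec B' ^ 2 * frobSq ((B - A) * A') := by
  set P := A * A'
  set Q := B * B'
  have hP : IsStarProjection P := hA.isStarProjection_mul
  have hQ : IsStarProjection Q := hB.isStarProjection_mul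
  have htr : P.trace = Q.trace := by rw [trace_mul_comm, hA1, trace_mul_comm, hB1]
  have hB'Q : B' * Q = B' := by rw [← Matrix.mul_assoc, hB.2.1]
  have hA'P : A' * P = A' := by rw [← Matrix.mul_assoc, hA.2.1]
  have hQB : Q * B = B := hB.1
  have hB'E : B' * ((B - A) * A') = A' - B' * P := by
    rw [Matrix.sub_mul, Matrix.mul_sub, ← Matrix.mul_assoc B' B, hB1, Matrix.one_mul]
  have h_range : (B' - A') * P = -(B' * (Q * ((B - A) * A'))) := by
    rw [← Matrix.mul_assoc B' Q, hB'Q, hB'E, Matrix.sub_mul, hA'P, neg_sub]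
  have h_kernel : (B' - A') * (1 - P) = B' * (Q * (1 - P)) := by
    rw [← Matrix.mul_assoc B' Q, hB'Q, Matrix.sub_mul, Matrix.mul_sub A', hA'P, Matrix.mul_one,
      sub_self, sub_zero]
  have h_compl : (1 - Q) * ((B - A) * A') = -((1 - Q) * P) := by
    rw [← Matrix.mul_assoc, Matrix.mul_sub, Matrix.sub_mul 1 Q B, Matrix.one_mul, hQB, sub_self,
      zero_sub, Matrix.neg_mul, Matrix.mul_assoc]
  calc frobSq (B' - A')
      = frobSq (B' * (Q * ((B - A) * A'))) + frobSq (B' * (Q * (1 - P))) := by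
        rw [hP.frobSq_eq_mul_add_mul_one_sub, h_range, h_kernel, frobSq_neg]
    _ ≤ spec B' ^ 2 * frobSq (Q * ((B - A) * A')) + spec B' ^ 2 * frobSq (Q * (1 - P)) :=
        add_le_add (frobSq_mul_le _ _) (frobSq_mul_le _ _)
    _ = spec B' ^ 2 * frobSq ((B - A) * A') := by
        rw [hQ.frobSq_eq_mul_add_one_sub_mul ((B - A) * A'), h_compl, frobSq_neg,
          hP.frobSq_mul_one_sub_eq hQ htr, mul_add]

end IsMoorePenrose

theorem stmt12_general {m n : ℕ}
    (A B : Matrix (Fin m) (Fin n) ℂ)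
    (Adag Bdag : Matrix (Fin n) (Fin m) ℂ)
    (hA : IsMoorePenrose A Adag) (hB : IsMoorePenrose B Bdag)
    (E : Matrix (Fin m) (Fin n) ℂ) (hE : E = B - A)
    (hrankA : A.rank = n) (hrankB : B.rank = n)
    :
    frobSq (Bdag - Adag) ≤
      min (spec Bdag ^ 2 * frobSq (E * Adag)) (spec Adag ^ 2 * frobSq (E * Bdag)) := by
  have hA1 := hA.mul_eq_one_of_rank_eq (by rw [hrankA, Fintype.card_fin])
  have hB1 := hB.mul_eq_one_of_rank_eq (by rw [hrankB, Fintype.card_fin])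
  subst hE
  refine le_min (hA.frobSq_sub_le hB hA1 hB1) ?_
  rw [frobSq_sub_comm, ← neg_sub A B, Matrix.neg_mul, frobSq_neg]
  exact hB.frobSq_sub_le hA hB1 hA1

theorem stmt12 {m n : ℕ}
    (A B : Matrix (Fin m) (Fin n) ℂ)
    (Adag Bdag : Matrix (Fin n) (Fin m) ℂ)
    (hA : IsMoorePenrose A Adag) (hB : IsMoorePenrose B Bdag)
    (E : Matrix (Fin m) (Fin n) ℂ) (hE : E = B - A)
    (hmn : n ≤ m) (hrankA : A.rank = n) (hrankB : B.rank = n)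
    :
    frobSq (Bdag - Adag) ≤
      min (spec Bdag ^ 2 * frobSq (E * Adag)) (spec Adag ^ 2 * frobSq (E * Bdag)) :=
  stmt12_general A B Adag Bdag hA hB E hE hrankA hrankB
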